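/- (No false dismissals) If a probabilistic object o^p is dominated by another probabilistic object n^p with probability Pr{n^p ≺ o^p} ≥ 1 − α, then the skyline probability of o^p in any window containing n^p as a competitor is at most α: Σ_{o ∈ o^p} o.p · Π_{q ∈ S}(1 − Pr{q ≺ o}) ≤ α whenever n^p ∈ S. -/

import Mathlib

open scoped Classical BigOperators

def dominates {d : ℕ} (o o' : Fin d → ℝ) : Prop :=
  (∀ i, o i ≥ o' i) ∧ (∃ j, o j > o' j)

open Finset

/-
The factor of the product belonging to `n^p` already bounds the whole product, since every factor
lies in `[0, 1]`. Averaging that factor over the instances of `o^p` gives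
`1 - Pr{n^p ≺ o^p} ≤ α`.
-/

theorem Finset.prod_le_of_mem_of_le_one {ι R : Type*} [CommSemiring R] [PartialOrder R]
    [IsOrderedRing R] {s : Finset ι} {f : ι → R} {i : ι} (hi : i ∈ s)
    (h0 : ∀ j ∈ s, 0 ≤ f j) (h1 : ∀ j ∈ s, f j ≤ 1) : ∏ j ∈ s, f j ≤ f i := by
  simpa using prod_le_prod_of_subset_of_le_one (singleton_subset_iff.2 hi) h0 fun j hj _ => h1 j hj

theorem Finset.sum_mul_one_sub_of_sum_eq_one {ι R : Type*} [Fintype ι] [CommRing R]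
    {p f : ι → R} (hp : ∑ a, p a = 1) : ∑ a, p a * (1 - f a) = 1 - ∑ a, p a * f a := by
  simp only [mul_sub, mul_one, sum_sub_distrib, hp]

/-- `Pr{n^p ≺ o}` for the probabilistic object `n^p` with instances `inst` and weights `w`. -/
noncomputable def dominanceProb {d : ℕ} {K : Type*} [Fintype K] (inst : K → Fin d → ℝ)
    (w : K → ℝ) (o : Fin d → ℝ) : ℝ :=
  ∑ s, w s * if dominates (inst s) o then 1 else 0

section dominanceProb

variable {d : ℕ} {K : Type*} [Fintype K] {inst : K → Fin d → ℝ} {w : K → ℝ}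

theorem dominanceProb_nonneg (hw0 : ∀ s, 0 ≤ w s) (o : Fin d → ℝ) :
    0 ≤ dominanceProb inst w o :=
  sum_nonneg fun s _ => mul_nonneg (hw0 s) (by split_ifs <;> norm_num)

theorem dominanceProb_le_one (hw0 : ∀ s, 0 ≤ w s) (hw1 : ∑ s, w s = 1) (o : Fin d → ℝ) :
    dominanceProb inst w o ≤ 1 :=
  calc dominanceProb inst w o ≤ ∑ s, w s :=
        sum_le_sum fun s _ => mul_le_of_le_one_right (hw0 s) (by split_ifs <;> norm_num)
    _ = 1 := hw1

theorem sum_sum_mul_ite_dominates_eq {ι : Type*} [Fintype ι] (x : ι → Fin d → ℝ) (p : ι → ℝ) :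
    ∑ s, ∑ a, w s * p a * (if dominates (inst s) (x a) then (1 : ℝ) else 0) =
      ∑ a, p a * dominanceProb inst w (x a) := by
  rw [sum_comm]
  refine sum_congr rfl fun a _ => ?_
  rw [dominanceProb, mul_sum]
  exact sum_congr rfl fun s _ => by ring

end dominanceProb

theorem no_false_dismissals_general
    {d : ℕ} {ι γ : Type*} [Fintype ι]
    (x : ι → Fin d → ℝ) (p : ι → ℝ)
    (hp0 : ∀ a, 0 ≤ p a) (hp1 : ∑ a, p a = 1)
    (K : γ → Type*) [∀ g, Fintype (K g)]
    (inst : ∀ g, K g → Fin d → ℝ) (w : ∀ g, K g → ℝ)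
    (hw0 : ∀ g (s : K g), 0 ≤ w g s) (hw1 : ∀ g, ∑ s, w g s = 1)
    (α : ℝ)
    (S : Finset γ) (np : γ) (hnp : np ∈ S)
    (hdom : (∑ s, ∑ a, w np s * p a *
        (if dominates (inst np s) (x a) then (1 : ℝ) else 0)) ≥ 1 - α) :
    ∑ a, p a * ∏ g ∈ S,
        (1 - ∑ s, w g s * (if dominates (inst g s) (x a) then (1 : ℝ) else 0)) ≤ α := by
  rw [sum_sum_mul_ite_dominates_eq] at hdom
  change ∑ a, p a * ∏ g ∈ S, (1 - dominanceProb (inst g) (w g) (x a)) ≤ α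
  calc ∑ a, p a * ∏ g ∈ S, (1 - dominanceProb (inst g) (w g) (x a))
      ≤ ∑ a, p a * (1 - dominanceProb (inst np) (w np) (x a)) := by
        refine sum_le_sum fun a _ => mul_le_mul_of_nonneg_left ?_ (hp0 a)
        refine prod_le_of_mem_of_le_one hnp (fun g _ => ?_) (fun g _ => ?_)
        · linarith [dominanceProb_le_one (inst := inst g) (hw0 g) (hw1 g) (x a)]
        · linarith [dominanceProb_nonneg (inst := inst g) (hw0 g) (x a)]
    _ = 1 - ∑ a, p a * dominanceProb (inst np) (w np) (x a) := sum_mul_one_sub_of_sum_eq_one hp1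
    _ ≤ α := by linarith

theorem no_false_dismissals
    {d : ℕ} {ι γ : Type*} [Fintype ι]
    (x : ι → Fin d → ℝ) (p : ι → ℝ)
    (hp0 : ∀ a, 0 ≤ p a) (hp1 : ∑ a, p a = 1)
    (K : γ → Type*) [∀ g, Fintype (K g)]
    (inst : ∀ g, K g → Fin d → ℝ) (w : ∀ g, K g → ℝ)
    (hw0 : ∀ g (s : K g), 0 ≤ w g s) (hw1 : ∀ g, ∑ s, w g s = 1)
    (α : ℝ) (hα0 : 0 ≤ α) (hα1 : α ≤ 1)
    (S : Finset γ) (np : γ) (hnp : np ∈ S)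
    (hdom : (∑ s, ∑ a, w np s * p a *
        (if dominates (inst np s) (x a) then (1 : ℝ) else 0)) ≥ 1 - α) :
    ∑ a, p a * ∏ g ∈ S,
        (1 - ∑ s, w g s * (if dominates (inst g s) (x a) then (1 : ℝ) else 0)) ≤ α :=
  no_false_dismissals_general x p hp0 hp1 K inst w hw0 hw1 α S np hnp hdom
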